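/- With constant parameter k > 0, the sequence A_j defined by A_1 = 1 + k + k(k+2) = k² + 3k + 1 and A_j = (A_{j-1}C_j - 1)/C_{j-1} (with B_j, C_j from the constant-k coupled recurrence) satisfies A_j = F_{2j+3}(√k) for all j ≥ 1, where F_n are the Fibonacci polynomials. -/
import Mathlib


/-- Fibonacci polynomials as real functions: `F 1 = 1`, `F 2 x = x`,
`F (n+1) x = x * F n x + F (n-1) x` (and `F 0 = 0`). -/
def fibP : ℕ → ℝ → ℝ
  | 0, _ => 0
  | 1, _ => 1
  | n + 2, x => x * fibP (n + 1) x + fibP n x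

lemma fibP_add_two (n : ℕ) (x : ℝ) :
    fibP (n + 2) x = x * fibP (n + 1) x + fibP n x := rfl

lemma fibP_nonneg (x : ℝ) (hx : 0 ≤ x) : ∀ n, 0 ≤ fibP n x := by
  intro n
  induction n using Nat.strong_induction_on with
  | _ n ih =>
    match n with
    | 0 => simp [fibP]
    | 1 => simp [fibP]
    | m + 2 =>
      rw [fibP_add_two]
      have h1 := ih (m + 1) (by omega)
      have h0 := ih m (by omega)
      positivity

lemma fibP_pos (x : ℝ) (hx : 0 < x) : ∀ n, 0 < fibP (n + 1) x := by
  intro n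
  match n with
  | 0 => simp [fibP]
  | m + 1 =>
    rw [fibP_add_two]
    have h1 := fibP_pos x hx m
    have h0 := fibP_nonneg x hx.le m
    nlinarith

lemma fibP_det (x : ℝ) : ∀ n : ℕ,
    fibP (n + 1) x * fibP (n + 2) x - fibP n x * fibP (n + 3) x = (-1) ^ n * x := by
  intro n
  induction n with
  | zero => simp [fibP]
  | succ m ih =>
    have e1 : fibP (m + 4) x = x * fibP (m + 3) x + fibP (m + 2) x := rfl
    have e2 : fibP (m + 2) x = x * fibP (m + 1) x + fibP m x := rfl
    have e3 : fibP (m + 3) x = x * fibP (m + 2) x + fibP (m + 1) x := rfl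
    rw [show m + 1 + 3 = m + 4 from rfl, show m + 1 + 2 = m + 3 from rfl,
      e1, e3, e2]
    rw [e3, e2] at ih
    ring_nf
    ring_nf at ih
    linarith

theorem A_eq_fibonacci_poly
    (k : ℝ) (hk : 0 < k) (A B C : ℕ → ℝ)
    (hA1 : A 1 = k ^ 2 + 3 * k + 1)
    (hB1 : B 1 = k + 1) (hC1 : C 1 = k + 2)
    (hB : ∀ j : ℕ, 2 ≤ j → B j = B (j - 1) + k * C (j - 1))
    (hC : ∀ j : ℕ, 2 ≤ j → C j = B (j - 1) + (k + 1) * C (j - 1))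
    (hA : ∀ j : ℕ, 2 ≤ j → A j = (A (j - 1) * C j - 1) / C (j - 1)) :
    ∀ j : ℕ, 1 ≤ j → A j = fibP (2 * j + 3) (Real.sqrt k) := by
  set s := Real.sqrt k with hs
  have hs0 : 0 < s := Real.sqrt_pos.mpr hk
  have hs2 : s ^ 2 = k := Real.sq_sqrt hk.le
  -- strengthened invariant
  have main : ∀ j : ℕ, 1 ≤ j → A j = fibP (2 * j + 3) s ∧
      B j = fibP (2 * j + 1) s ∧ s * C j = fibP (2 * j + 2) s := by
    intro j hj
    induction j, hj using Nat.le_induction with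
    | base =>
      refine ⟨?_, ?_, ?_⟩
      · rw [hA1]; simp [fibP]; nlinarith [hs2]
      · rw [hB1]; simp [fibP]; nlinarith [hs2]
      · rw [hC1]; simp [fibP]; nlinarith [hs2]
    | succ j hj ih =>
      obtain ⟨ihA, ihB, ihC⟩ := ih
      have h2 : 2 ≤ j + 1 := by omega
      have hsub : j + 1 - 1 = j := by omega
      have hBj := hB (j + 1) h2; rw [hsub] at hBj
      have hCj := hC (j + 1) h2; rw [hsub] at hCj
      have hAj := hA (j + 1) h2; rw [hsub] at hAj
      have e3 : fibP (2 * j + 3) s = s * fibP (2 * j + 2) s + fibP (2 * j + 1) s := rfl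
      have e4 : fibP (2 * j + 4) s = s * fibP (2 * j + 3) s + fibP (2 * j + 2) s := rfl
      have hB' : B (j + 1) = fibP (2 * (j + 1) + 1) s := by
        rw [show 2 * (j + 1) + 1 = 2 * j + 3 from by ring, e3, hBj, ihB]
        linear_combination s * ihC - C j * hs2
      have hC' : s * C (j + 1) = fibP (2 * (j + 1) + 2) s := by
        rw [show 2 * (j + 1) + 2 = 2 * j + 4 from by ring, e4, e3, hCj, ihB]
        linear_combination (k + 1) * ihC - fibP (2 * j + 2) s * hs2
      -- positivity of C j
      have hCjpos : 0 < C j := by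
        have := fibP_pos s hs0 (2 * j + 1)
        nlinarith [ihC]
      have key := fibP_det s (2 * j + 2)
      have hsign : ((-1 : ℝ)) ^ (2 * j + 2) = 1 := by
        rw [show 2 * j + 2 = 2 * (j + 1) from by ring, pow_mul]; norm_num
      rw [hsign, one_mul] at key
      -- key : fibP (2j+3) * fibP (2j+4) - fibP (2j+2) * fibP (2j+5) = s
      have hA' : A (j + 1) = fibP (2 * (j + 1) + 3) s := by
        rw [hAj, div_eq_iff (ne_of_gt hCjpos),
          show 2 * (j + 1) + 3 = 2 * j + 5 from by ring]
        -- goal : A j * C (j+1) - 1 = fibP (2j+5) s * C j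
        apply mul_left_cancel₀ (ne_of_gt hs0)
        rw [show 2 * (j + 1) + 2 = 2 * j + 4 from by ring] at hC'
        have expand : s * (A j * C (j + 1) - 1)
            = fibP (2 * j + 3) s * fibP (2 * j + 4) s - s := by
          rw [ihA]; linear_combination fibP (2 * j + 3) s * hC'
        rw [show 2 * j + 2 + 3 = 2 * j + 5 from rfl,
            show 2 * j + 2 + 1 = 2 * j + 3 from rfl,
            show 2 * j + 2 + 2 = 2 * j + 4 from rfl] at key
        rw [expand]
        linear_combination key - fibP (2 * j + 5) s * ihC
      exact ⟨hA', hB', hC'⟩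
  intro j hj
  exact (main j hj).1
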